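/- arXiv:2009.11748 — 7 statements merged into one kernel-verified Lean document; each statement's English description precedes it below -/
import Mathlib

section
/- Let X₁, X₂ : ℝ³ → ℝ³ be C¹ maps and f : ℝ³ → ℝ be C². Define X_f : ℝ³ → ℝ³ by X_f(x) = (X₁f)(x)·X₂(x) − (X₂f)(x)·X₁(x). If p ∈ ℝ³ satisfies (X₁f)(p) = (X₂f)(p) = 0, then X_f(p) = 0, the Fréchet derivative of X_f at p is the linear map v ↦ (D(X₁f)(p)v)·X₂(p) − (D(X₂f)(p)v)·X₁(p), and its trace (the divergence of X_f at p) equals X₂(X₁f)(p) − X₁(X₂f)(p), i.e. the value ([X₂,X₁]f)(p). -/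
/-!
At a characteristic point the coefficients `X₁f`, `X₂f` of `X_f` vanish, so in the product rule
for `(X₁f) X₂ − (X₂f) X₁` the terms carrying derivatives of `X₁`, `X₂` drop out. What remains is
a difference of the rank-one maps `v ↦ D(X₁f)(p)v · X₂(p)` and `v ↦ D(X₂f)(p)v · X₁(p)`, and the
trace of `v ↦ ℓ(v) w` is `ℓ(w)`.
-/

open Asymptotics Filter Topology

section

variable {𝕜 E F : Type*} [NontriviallyNormedField 𝕜]
  [NormedAddCommGroup E] [NormedSpace 𝕜 E] [NormedAddCommGroup F] [NormedSpace 𝕜 F]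

theorem HasFDerivAt.smul_of_eq_zero {c : E → 𝕜} {c' : E →L[𝕜] 𝕜} {g : E → F} {x : E}
    (hc : HasFDerivAt c c' x) (hcx : c x = 0) (hg : ContinuousAt g x) :
    HasFDerivAt (fun y => c y • g y) (c'.smulRight (g x)) x := by
  have hcO : (fun y => ‖c y‖) =O[𝓝 x] fun y => ‖y - x‖ := by
    simpa [hcx] using hc.isBigO_sub.norm_norm
  have hgo : (fun y => ‖g y - g x‖) =o[𝓝 x] fun _ => (1 : ℝ) :=
    (isLittleO_one_iff ℝ).2 (by simpa using (tendsto_sub_nhds_zero_iff.2 hg).norm)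
  have hrem : HasFDerivAt (fun y => c y • (g y - g x)) (0 : E →L[𝕜] F) x := by
    refine .of_isLittleO ?_
    rw [← isLittleO_norm_left, ← isLittleO_norm_right]
    simpa [hcx, norm_smul] using hcO.mul_isLittleO hgo
  convert (hc.smul_const (g x)).add hrem using 1
  · ext y
    simp [smul_sub]
  · simp

theorem ContDiff.differentiable_fderiv_apply {f : E → F} {X : E → E} (hf : ContDiff 𝕜 2 f)
    (hX : ContDiff 𝕜 1 X) : Differentiable 𝕜 fun x => fderiv 𝕜 f x (X x) :=
  ((hf.fderiv_right le_rfl).clm_apply hX).differentiable one_ne_zero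

theorem ContinuousLinearMap.trace_smulRight [Module.Free 𝕜 E] [Module.Finite 𝕜 E]
    (c : E →L[𝕜] 𝕜) (v : E) :
    LinearMap.trace 𝕜 E (c.smulRight v : E →L[𝕜] E) = c v :=
  LinearMap.trace_smulRight (c : E →ₗ[𝕜] 𝕜) v

end

/-- For C¹ vector fields `X₁, X₂` on `ℝ³` and a C² function `f`, the characteristic
vector field `X_f = (X₁f)X₂ − (X₂f)X₁` vanishes at a point `p` where `X₁f(p) = X₂f(p) = 0`;
its Fréchet derivative there is `v ↦ (D(X₁f)(p)v)·X₂(p) − (D(X₂f)(p)v)·X₁(p)`, and the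
trace of this derivative (the divergence of `X_f` at `p`) equals
`X₂(X₁f)(p) − X₁(X₂f)(p) = ([X₂,X₁]f)(p)`. -/
theorem characteristic_vector_field_derivative_and_divergence
    (X₁ X₂ : (Fin 3 → ℝ) → (Fin 3 → ℝ)) (f : (Fin 3 → ℝ) → ℝ)
    (hX₁ : ContDiff ℝ 1 X₁) (hX₂ : ContDiff ℝ 1 X₂) (hf : ContDiff ℝ 2 f)
    (X₁f X₂f : (Fin 3 → ℝ) → ℝ)
    (hX₁f : X₁f = fun x => fderiv ℝ f x (X₁ x))
    (hX₂f : X₂f = fun x => fderiv ℝ f x (X₂ x))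
    (Xf : (Fin 3 → ℝ) → (Fin 3 → ℝ))
    (hXf : Xf = fun x => X₁f x • X₂ x - X₂f x • X₁ x)
    (p : Fin 3 → ℝ) (hp1 : X₁f p = 0) (hp2 : X₂f p = 0) :
    Xf p = 0 ∧
    (∀ v : Fin 3 → ℝ,
      fderiv ℝ Xf p v = (fderiv ℝ X₁f p v) • X₂ p - (fderiv ℝ X₂f p v) • X₁ p) ∧
    LinearMap.trace ℝ (Fin 3 → ℝ)
        ((fderiv ℝ Xf p : (Fin 3 → ℝ) →L[ℝ] (Fin 3 → ℝ)) :
          (Fin 3 → ℝ) →ₗ[ℝ] (Fin 3 → ℝ)) =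
      fderiv ℝ X₁f p (X₂ p) - fderiv ℝ X₂f p (X₁ p) := by
  have hD₁ : HasFDerivAt X₁f (fderiv ℝ X₁f p) p :=
    (hX₁f ▸ hf.differentiable_fderiv_apply hX₁ p).hasFDerivAt
  have hD₂ : HasFDerivAt X₂f (fderiv ℝ X₂f p) p :=
    (hX₂f ▸ hf.differentiable_fderiv_apply hX₂ p).hasFDerivAt
  have hDXf : fderiv ℝ Xf p =
      (fderiv ℝ X₁f p).smulRight (X₂ p) - (fderiv ℝ X₂f p).smulRight (X₁ p) := by
    subst hXf
    exact ((hD₁.smul_of_eq_zero hp1 hX₂.continuous.continuousAt).sub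
      (hD₂.smul_of_eq_zero hp2 hX₁.continuous.continuousAt)).fderiv
  refine ⟨by simp [hXf, hp1, hp2], fun v => by simp [hDXf], ?_⟩
  rw [hDXf, ContinuousLinearMap.toLinearMap_sub, map_sub, ContinuousLinearMap.trace_smulRight,
    ContinuousLinearMap.trace_smulRight]
end

section
/- Let X₁, X₂ : ℝ³ → ℝ³ be C¹ maps and f : ℝ³ → ℝ be C², define X_f = (X₁f)·X₂ − (X₂f)·X₁, and let p ∈ ℝ³ satisfy (X₁f)(p) = (X₂f)(p) = 0. Assume moreover that X₁(p) and X₂(p) are linearly independent, and let D_p = span{X₁(p), X₂(p)} ⊆ ℝ³. Then the Fréchet derivative D X_f(p) maps all of ℝ³ into D_p; in particular it restricts to an endomorphism of D_p, whose matrix in the basis (X₁(p), X₂(p)) is [[−X₁(X₂f)(p), −X₂(X₂f)(p)], [X₁(X₁f)(p), X₂(X₁f)(p)]]. Consequently the determinant of this restricted endomorphism equals X₁(X₁f)(p)·X₂(X₂f)(p) − X₁(X₂f)(p)·X₂(X₁f)(p) (the determinant of the horizontal Hessian of f at p), and its trace equals X₂(X₁f)(p) − X₁(X₂f)(p) = ([X₂,X₁]f)(p).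 -/
/-! At a common zero `p` of `a = X₁f` and `b = X₂f`, the product rule for
`a • X₂ - b • X₁` loses the terms `a(p) DX₂(p)` and `b(p) DX₁(p)`, so
`DX_f(p) v = Da(p) v • X₂(p) - Db(p) v • X₁(p)` lies in `span {X₁(p), X₂(p)}`;
evaluating at `v = X₁(p), X₂(p)` gives the matrix. -/

section ProductRuleAtZero

variable {𝕜 E F : Type*} [NontriviallyNormedField 𝕜] [NormedAddCommGroup E] [NormedSpace 𝕜 E]
  [NormedAddCommGroup F] [NormedSpace 𝕜 F] {p : E}

theorem HasFDerivAt.smul_of_apply_eq_zero {a : E → 𝕜} {a' : E →L[𝕜] 𝕜} {Y : E → F}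
    (ha : HasFDerivAt a a' p) (hY : DifferentiableAt 𝕜 Y p) (ha₀ : a p = 0) :
    HasFDerivAt (fun x => a x • Y x) (a'.smulRight (Y p)) p := by
  have h := ha.smul hY.hasFDerivAt
  rwa [ha₀, zero_smul, zero_add] at h

theorem HasFDerivAt.smul_sub_smul_of_apply_eq_zero {a b : E → 𝕜} {a' b' : E →L[𝕜] 𝕜}
    {Y Z : E → F} (ha : HasFDerivAt a a' p) (hb : HasFDerivAt b b' p)
    (hY : DifferentiableAt 𝕜 Y p) (hZ : DifferentiableAt 𝕜 Z p) (ha₀ : a p = 0) (hb₀ : b p = 0) :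
    HasFDerivAt (fun x => a x • Y x - b x • Z x) (a'.smulRight (Y p) - b'.smulRight (Z p)) p :=
  (ha.smul_of_apply_eq_zero hY ha₀).sub (hb.smul_of_apply_eq_zero hZ hb₀)

theorem ContDiff.differentiableAt_fderiv_apply {f : E → F} {Y : E → E} (hf : ContDiff 𝕜 2 f)
    (hY : DifferentiableAt 𝕜 Y p) : DifferentiableAt 𝕜 (fun x => fderiv 𝕜 f x (Y x)) p :=
  ((hf.fderiv_right le_rfl).differentiable one_ne_zero p).clm_apply hY

end ProductRuleAtZero

theorem characteristic_vector_field_restricted_matrix_general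
    (X₁ X₂ : (Fin 3 → ℝ) → (Fin 3 → ℝ)) (f : (Fin 3 → ℝ) → ℝ)
    (hX₁ : ContDiff ℝ 1 X₁) (hX₂ : ContDiff ℝ 1 X₂) (hf : ContDiff ℝ 2 f)
    (X₁f X₂f : (Fin 3 → ℝ) → ℝ)
    (hX₁f : X₁f = fun x => fderiv ℝ f x (X₁ x))
    (hX₂f : X₂f = fun x => fderiv ℝ f x (X₂ x))
    (Xf : (Fin 3 → ℝ) → (Fin 3 → ℝ))
    (hXf : Xf = fun x => X₁f x • X₂ x - X₂f x • X₁ x)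
    (p : Fin 3 → ℝ) (hp1 : X₁f p = 0) (hp2 : X₂f p = 0)
    (Dp : Submodule ℝ (Fin 3 → ℝ))
    (hDp : Dp = Submodule.span ℝ {X₁ p, X₂ p}) :
    (∀ v : Fin 3 → ℝ, fderiv ℝ Xf p v ∈ Dp) ∧
    fderiv ℝ Xf p (X₁ p)
      = (-(fderiv ℝ X₂f p (X₁ p))) • X₁ p + (fderiv ℝ X₁f p (X₁ p)) • X₂ p ∧
    fderiv ℝ Xf p (X₂ p)
      = (-(fderiv ℝ X₂f p (X₂ p))) • X₁ p + (fderiv ℝ X₁f p (X₂ p)) • X₂ p ∧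
    Matrix.det !![-(fderiv ℝ X₂f p (X₁ p)), -(fderiv ℝ X₂f p (X₂ p));
                  fderiv ℝ X₁f p (X₁ p), fderiv ℝ X₁f p (X₂ p)]
      = fderiv ℝ X₁f p (X₁ p) * fderiv ℝ X₂f p (X₂ p)
        - fderiv ℝ X₂f p (X₁ p) * fderiv ℝ X₁f p (X₂ p) ∧
    Matrix.trace !![-(fderiv ℝ X₂f p (X₁ p)), -(fderiv ℝ X₂f p (X₂ p));
                    fderiv ℝ X₁f p (X₁ p), fderiv ℝ X₁f p (X₂ p)]
      = fderiv ℝ X₁f p (X₂ p) - fderiv ℝ X₂f p (X₁ p) := by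
  have hY₁ : DifferentiableAt ℝ X₁ p := hX₁.differentiable one_ne_zero p
  have hY₂ : DifferentiableAt ℝ X₂ p := hX₂.differentiable one_ne_zero p
  have hD₁ : DifferentiableAt ℝ X₁f p := hX₁f ▸ hf.differentiableAt_fderiv_apply hY₁
  have hD₂ : DifferentiableAt ℝ X₂f p := hX₂f ▸ hf.differentiableAt_fderiv_apply hY₂
  have hDXf (v : Fin 3 → ℝ) :
      fderiv ℝ Xf p v = fderiv ℝ X₁f p v • X₂ p - fderiv ℝ X₂f p v • X₁ p := by
    rw [hXf, (hD₁.hasFDerivAt.smul_sub_smul_of_apply_eq_zero hD₂.hasFDerivAt hY₂ hY₁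
      hp1 hp2).fderiv]
    rfl
  refine ⟨fun v => ?_, by rw [hDXf]; module, by rw [hDXf]; module,
    by rw [Matrix.det_fin_two_of]; ring, by rw [Matrix.trace_fin_two_of]; ring⟩
  rw [hDp, Submodule.mem_span_pair]
  exact ⟨-fderiv ℝ X₂f p v, fderiv ℝ X₁f p v, by rw [hDXf]; module⟩

/-- For C¹ vector fields `X₁, X₂` on `ℝ³` and a C² function `f`, with
`X_f = (X₁f)X₂ − (X₂f)X₁` and `p` a point where `X₁f(p) = X₂f(p) = 0` and
`X₁(p), X₂(p)` are linearly independent, the Fréchet derivative `DX_f(p)` maps `ℝ³`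
into `D_p = span{X₁(p), X₂(p)}`; in the basis `(X₁(p), X₂(p))` the restricted
endomorphism has matrix `[[−X₁(X₂f)(p), −X₂(X₂f)(p)], [X₁(X₁f)(p), X₂(X₁f)(p)]]`,
whose determinant is `det Hess_H f(p)` and whose trace is `([X₂,X₁]f)(p)`. -/
theorem characteristic_vector_field_restricted_matrix
    (X₁ X₂ : (Fin 3 → ℝ) → (Fin 3 → ℝ)) (f : (Fin 3 → ℝ) → ℝ)
    (hX₁ : ContDiff ℝ 1 X₁) (hX₂ : ContDiff ℝ 1 X₂) (hf : ContDiff ℝ 2 f)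
    (X₁f X₂f : (Fin 3 → ℝ) → ℝ)
    (hX₁f : X₁f = fun x => fderiv ℝ f x (X₁ x))
    (hX₂f : X₂f = fun x => fderiv ℝ f x (X₂ x))
    (Xf : (Fin 3 → ℝ) → (Fin 3 → ℝ))
    (hXf : Xf = fun x => X₁f x • X₂ x - X₂f x • X₁ x)
    (p : Fin 3 → ℝ) (hp1 : X₁f p = 0) (hp2 : X₂f p = 0)
    (hind : LinearIndependent ℝ ![X₁ p, X₂ p])
    (Dp : Submodule ℝ (Fin 3 → ℝ))
    (hDp : Dp = Submodule.span ℝ {X₁ p, X₂ p}) :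
    (∀ v : Fin 3 → ℝ, fderiv ℝ Xf p v ∈ Dp) ∧
    fderiv ℝ Xf p (X₁ p)
      = (-(fderiv ℝ X₂f p (X₁ p))) • X₁ p + (fderiv ℝ X₁f p (X₁ p)) • X₂ p ∧
    fderiv ℝ Xf p (X₂ p)
      = (-(fderiv ℝ X₂f p (X₂ p))) • X₁ p + (fderiv ℝ X₁f p (X₂ p)) • X₂ p ∧
    Matrix.det !![-(fderiv ℝ X₂f p (X₁ p)), -(fderiv ℝ X₂f p (X₂ p));
                  fderiv ℝ X₁f p (X₁ p), fderiv ℝ X₁f p (X₂ p)]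
      = fderiv ℝ X₁f p (X₁ p) * fderiv ℝ X₂f p (X₂ p)
        - fderiv ℝ X₂f p (X₁ p) * fderiv ℝ X₁f p (X₂ p) ∧
    Matrix.trace !![-(fderiv ℝ X₂f p (X₁ p)), -(fderiv ℝ X₂f p (X₂ p));
                    fderiv ℝ X₁f p (X₁ p), fderiv ℝ X₁f p (X₂ p)]
      = fderiv ℝ X₁f p (X₂ p) - fderiv ℝ X₂f p (X₁ p) :=
  characteristic_vector_field_restricted_matrix_general X₁ X₂ f hX₁ hX₂ hf X₁f X₂f hX₁f hX₂f Xf hXf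
    p hp1 hp2 Dp hDp
end

section
/- Let X₁, X₂ : ℝ³ → ℝ³ be C¹ maps, f : ℝ³ → ℝ be C², and p ∈ ℝ³ with f(p) = 0, Df(p) ≠ 0, (X₁f)(p) = (X₂f)(p) = 0 and X₂(X₁f)(p) − X₁(X₂f)(p) ≠ 0. Then there exist an index i ∈ {1,2} and an open neighborhood U of p such that the C¹ map g : ℝ³ → ℝ², g(x) = (f(x), (X_if)(x)), has surjective Fréchet derivative at p and satisfies {x ∈ U : f(x) = 0 ∧ (X₁f)(x) = 0 ∧ (X₂f)(x) = 0} ⊆ g⁻¹({0}). (Thus, near p, the characteristic set of the surface f⁻¹(0) is contained in the one-dimensional C¹ submanifold g⁻¹({0}).) -/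
open Set

section

variable {𝕜 E : Type*} [NontriviallyNormedField 𝕜] [NormedAddCommGroup E] [NormedSpace 𝕜 E]

theorem ContinuousLinearMap.prod_surjective_of_apply_eq_zero {φ ψ : E →L[𝕜] 𝕜} (hφ : φ ≠ 0)
    {u : E} (hφu : φ u = 0) (hψu : ψ u ≠ 0) : Function.Surjective (φ.prod ψ) := by
  obtain ⟨v, hv⟩ : ∃ v, φ v ≠ 0 := by
    by_contra! h
    exact hφ (ContinuousLinearMap.ext h)
  rintro ⟨a, b⟩
  refine ⟨(a / φ v) • v + ((b - a / φ v * ψ v) / ψ u) • u, ?_⟩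
  simp only [map_add, map_smul, ContinuousLinearMap.prod_apply, hφu, Prod.smul_mk, smul_eq_mul,
    mul_zero, Prod.mk_add_mk, add_zero, Prod.mk.injEq]
  constructor
  · field_simp
  · field_simp
    ring

theorem surjective_fderiv_prodMk_of_apply_eq_zero {f g : E → 𝕜} {p u : E}
    (hf : DifferentiableAt 𝕜 f p) (hg : DifferentiableAt 𝕜 g p) (hDf : fderiv 𝕜 f p ≠ 0)
    (hDfu : fderiv 𝕜 f p u = 0) (hDgu : fderiv 𝕜 g p u ≠ 0) :
    Function.Surjective (fderiv 𝕜 (fun x => (f x, g x)) p) := by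
  rw [(hf.hasFDerivAt.prodMk hg.hasFDerivAt).fderiv]
  exact ContinuousLinearMap.prod_surjective_of_apply_eq_zero hDf hDfu hDgu

end

theorem characteristic_set_in_one_dim_submanifold_general
    (X₁ X₂ : (Fin 3 → ℝ) → (Fin 3 → ℝ)) (f : (Fin 3 → ℝ) → ℝ)
    (hX₁ : ContDiff ℝ 1 X₁) (hX₂ : ContDiff ℝ 1 X₂) (hf : ContDiff ℝ 2 f)
    (X₁f X₂f : (Fin 3 → ℝ) → ℝ)
    (hX₁f : X₁f = fun x => fderiv ℝ f x (X₁ x))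
    (hX₂f : X₂f = fun x => fderiv ℝ f x (X₂ x))
    (p : Fin 3 → ℝ) (hdfp : fderiv ℝ f p ≠ 0)
    (hp1 : X₁f p = 0) (hp2 : X₂f p = 0)
    (hcontact : fderiv ℝ X₁f p (X₂ p) - fderiv ℝ X₂f p (X₁ p) ≠ 0) :
    ∃ Xif : (Fin 3 → ℝ) → ℝ, (Xif = X₁f ∨ Xif = X₂f) ∧
      ∃ U : Set (Fin 3 → ℝ), IsOpen U ∧ p ∈ U ∧
        ∃ g : (Fin 3 → ℝ) → ℝ × ℝ, g = (fun x => (f x, Xif x)) ∧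
          ContDiff ℝ 1 g ∧
          Function.Surjective (fderiv ℝ g p) ∧
          {x ∈ U | f x = 0 ∧ X₁f x = 0 ∧ X₂f x = 0} ⊆ g ⁻¹' {0} := by
  have hDf : ContDiff ℝ 1 (fderiv ℝ f) := hf.fderiv_right le_rfl
  have hX₁f_smooth : ContDiff ℝ 1 X₁f := hX₁f ▸ hDf.clm_apply hX₁
  have hX₂f_smooth : ContDiff ℝ 1 X₂f := hX₂f ▸ hDf.clm_apply hX₂
  -- The contact condition makes one of `X₂(X₁f)(p)`, `X₁(X₂f)(p)` nonzero, while
  -- `X₁ p, X₂ p ∈ ker Df(p)` because `p` is characteristic.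
  obtain ⟨Xif, hXif, hXif_smooth, u, hDfu, hDXifu⟩ : ∃ Xif, (Xif = X₁f ∨ Xif = X₂f) ∧
      ContDiff ℝ 1 Xif ∧ ∃ u, fderiv ℝ f p u = 0 ∧ fderiv ℝ Xif p u ≠ 0 := by
    by_cases h : fderiv ℝ X₁f p (X₂ p) = 0
    · refine ⟨X₂f, .inr rfl, hX₂f_smooth, X₁ p, by simpa [hX₁f] using hp1, ?_⟩
      exact fun h' => hcontact (by rw [h, h', sub_zero])
    · exact ⟨X₁f, .inl rfl, hX₁f_smooth, X₂ p, by simpa [hX₂f] using hp2, h⟩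
  refine ⟨Xif, hXif, univ, isOpen_univ, mem_univ p, _, rfl,
    (hf.of_le one_le_two).prodMk hXif_smooth, ?_, ?_⟩
  · exact surjective_fderiv_prodMk_of_apply_eq_zero (hf.differentiable two_ne_zero p)
      (hXif_smooth.differentiable one_ne_zero p) hdfp hDfu hDXifu
  · rintro x ⟨-, hfx, h₁x, h₂x⟩
    rcases hXif with rfl | rfl <;> simp [Prod.ext_iff, hfx, h₁x, h₂x]

/-- Local form of the paper's Lemma 2.2: if `f` is a C² submersion at `p`,
`(X₁f)(p) = (X₂f)(p) = 0`, and the contact condition `[X₂,X₁]f(p) ≠ 0` holds, then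
for some `i ∈ {1,2}` the C¹ map `g = (f, X_if)` has surjective differential at `p`
and, on a neighbourhood `U` of `p`, the characteristic set
`{f = 0, X₁f = 0, X₂f = 0}` is contained in `g⁻¹(0)` (a one-dimensional C¹
submanifold). -/
theorem characteristic_set_in_one_dim_submanifold
    (X₁ X₂ : (Fin 3 → ℝ) → (Fin 3 → ℝ)) (f : (Fin 3 → ℝ) → ℝ)
    (hX₁ : ContDiff ℝ 1 X₁) (hX₂ : ContDiff ℝ 1 X₂) (hf : ContDiff ℝ 2 f)
    (X₁f X₂f : (Fin 3 → ℝ) → ℝ)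
    (hX₁f : X₁f = fun x => fderiv ℝ f x (X₁ x))
    (hX₂f : X₂f = fun x => fderiv ℝ f x (X₂ x))
    (p : Fin 3 → ℝ) (hfp : f p = 0) (hdfp : fderiv ℝ f p ≠ 0)
    (hp1 : X₁f p = 0) (hp2 : X₂f p = 0)
    (hcontact : fderiv ℝ X₁f p (X₂ p) - fderiv ℝ X₂f p (X₁ p) ≠ 0) :
    ∃ Xif : (Fin 3 → ℝ) → ℝ, (Xif = X₁f ∨ Xif = X₂f) ∧
      ∃ U : Set (Fin 3 → ℝ), IsOpen U ∧ p ∈ U ∧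
        ∃ g : (Fin 3 → ℝ) → ℝ × ℝ, g = (fun x => (f x, Xif x)) ∧
          ContDiff ℝ 1 g ∧
          Function.Surjective (fderiv ℝ g p) ∧
          {x ∈ U | f x = 0 ∧ X₁f x = 0 ∧ X₂f x = 0} ⊆ g ⁻¹' {0} :=
  characteristic_set_in_one_dim_submanifold_general X₁ X₂ f hX₁ hX₂ hf X₁f X₂f hX₁f hX₂f p hdfp hp1
    hp2 hcontact
end

section
/- Let n ≥ 1, let X : ℝⁿ → ℝⁿ be Lipschitz, and let γ, ζ : ℝ → ℝⁿ be curves satisfying γ'(t) = X(γ(t)) and ζ'(t) = X(ζ(t)) for all t ≥ 0 (in the sense of HasDerivAt). Assume there exist constants C > 0, α > 0 and t₀ ≥ 0 such that ‖γ(t) − ζ(t)‖ ≤ C·e^{−α t} for all t ≥ t₀, and assume that t ↦ ‖ζ'(t)‖ = ‖X(ζ(t))‖ is integrable on [0, ∞). Then t ↦ ‖X(γ(t))‖ = ‖γ'(t)‖ is also integrable on [0, ∞); that is, γ|[0,∞) has finite length. -/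
open MeasureTheory

/-- A trajectory of a Lipschitz vector field that approaches exponentially fast another
trajectory of finite length itself has integrable speed on `[0, ∞)`, i.e., finite
length. -/
theorem finite_length_of_exponential_approach_to_finite_length_trajectory
    (n : ℕ) (hn : 1 ≤ n)
    (X : EuclideanSpace ℝ (Fin n) → EuclideanSpace ℝ (Fin n))
    (L : NNReal) (hX : LipschitzWith L X)
    (γ ζ : ℝ → EuclideanSpace ℝ (Fin n))
    (hγ : ∀ t : ℝ, 0 ≤ t → HasDerivAt γ (X (γ t)) t)
    (hζ : ∀ t : ℝ, 0 ≤ t → HasDerivAt ζ (X (ζ t)) t)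
    (C α t₀ : ℝ) (hC : 0 < C) (hα : 0 < α) (ht₀ : 0 ≤ t₀)
    (happrox : ∀ t : ℝ, t₀ ≤ t → ‖γ t - ζ t‖ ≤ C * Real.exp (-α * t))
    (hζlen : IntegrableOn (fun t : ℝ => ‖X (ζ t)‖) (Set.Ici 0)) :
    IntegrableOn (fun t : ℝ => ‖X (γ t)‖) (Set.Ici 0) := by
  have hγc : ContinuousOn γ (Set.Ici 0) := fun t ht =>
    (hγ t ht).continuousAt.continuousWithinAt
  have hfc : ContinuousOn (fun t : ℝ => ‖X (γ t)‖) (Set.Ici 0) :=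
    (hX.continuous.comp_continuousOn hγc).norm
  have hsplit : Set.Ici (0:ℝ) = Set.Icc 0 t₀ ∪ Set.Ici t₀ := by
    ext x
    simp only [Set.mem_Ici, Set.mem_union, Set.mem_Icc]
    constructor
    · intro hx
      rcases le_total x t₀ with h | h
      · exact Or.inl ⟨hx, h⟩
      · exact Or.inr h
    · rintro (⟨hx, _⟩ | hx)
      · exact hx
      · exact le_trans ht₀ hx
  rw [hsplit]
  apply IntegrableOn.union
  · exact (hfc.mono (Set.Icc_subset_Ici_self)).integrableOn_Icc
  · -- on [t₀, ∞), dominate by ‖X (ζ t)‖ + L * C * exp (-α t)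
    have hg : IntegrableOn (fun t : ℝ => ‖X (ζ t)‖ + (L : ℝ) * C * Real.exp (-α * t))
        (Set.Ici t₀) := by
      apply Integrable.add
      · exact hζlen.mono_set (Set.Ici_subset_Ici.mpr ht₀)
      · have : IntegrableOn (fun t : ℝ => Real.exp (-α * t)) (Set.Ioi t₀) :=
          exp_neg_integrableOn_Ioi t₀ hα
        have h3 : IntegrableOn (fun t : ℝ => (L : ℝ) * C * Real.exp (-α * t))
            (Set.Ici t₀) := by
          rw [integrableOn_Ici_iff_integrableOn_Ioi]
          exact this.const_mul _
        exact h3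
    apply hg.mono'
    · exact (hfc.mono (Set.Ici_subset_Ici.mpr ht₀)).aestronglyMeasurable measurableSet_Ici
    · rw [ae_restrict_iff' measurableSet_Ici]
      refine ae_of_all _ fun t ht => ?_
      have h1 : ‖X (γ t) - X (ζ t)‖ ≤ (L : ℝ) * ‖γ t - ζ t‖ := by
        simpa [dist_eq_norm] using hX.dist_le_mul (γ t) (ζ t)
      have h2 : ‖γ t - ζ t‖ ≤ C * Real.exp (-α * t) := happrox t ht
      have : ‖X (γ t)‖ ≤ ‖X (ζ t)‖ + ‖X (γ t) - X (ζ t)‖ := by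
        calc ‖X (γ t)‖ = ‖X (ζ t) + (X (γ t) - X (ζ t))‖ := by congr 1; abel
          _ ≤ ‖X (ζ t)‖ + ‖X (γ t) - X (ζ t)‖ := norm_add_le _ _
      rw [Real.norm_eq_abs, abs_of_nonneg (norm_nonneg _)]
      calc ‖X (γ t)‖ ≤ ‖X (ζ t)‖ + ‖X (γ t) - X (ζ t)‖ := this
        _ ≤ ‖X (ζ t)‖ + (L : ℝ) * ‖γ t - ζ t‖ := by linarith
        _ ≤ ‖X (ζ t)‖ + (L : ℝ) * C * Real.exp (-α * t) := by
            have := mul_le_mul_of_nonneg_left h2 L.coe_nonneg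
            rw [mul_assoc]
            linarith
end

section
/- Let a, b, c > 0 and let f : ℝ³ → ℝ, f(x, y, z) = x²/a² + y²/b² + z²/c² − 1 (an ellipsoid). Then the set of points p ∈ ℝ³ with f(p) = 0 for which Df(p) is a scalar multiple of ω_p is exactly {(0, 0, c), (0, 0, −c)}; that is, the ellipsoid has exactly two characteristic points for the Heisenberg contact structure, namely the North and South poles (0, 0, ±c). -/
/-! On the ellipsoid, Euler's identity gives `Df(p)(p) = 2`, while `ω_p(p) = p₃`; so the
multiplier `λ` of a characteristic point satisfies `λ p₃ = 2` and is nonzero. Testing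
`Df(p) = λ ω_p` on the first two basis vectors gives a linear system for `(p₁, p₂)` whose matrix
is a nonnegative diagonal `diag(2/a², 2/b²)` plus the skew part `±λ/2`; its determinant is
positive, so `p₁ = p₂ = 0` and then `p₃ = ±c`. At the poles `ω_p = dz`, which is proportional to
`Df(p)`. -/

/-- The Heisenberg contact form at `p`, `ω_p(v) = v₃ + (p₂v₁ − p₁v₂)/2`. -/
noncomputable def heisenbergForm (p v : ℝ × ℝ × ℝ) : ℝ :=
  v.2.2 + (p.2.1 * v.1 - p.1 * v.2.1) / 2

def IsCharacteristicPoint (f : ℝ × ℝ × ℝ → ℝ) (p : ℝ × ℝ × ℝ) : Prop :=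
  f p = 0 ∧ ∃ l : ℝ, ∀ v : ℝ × ℝ × ℝ, fderiv ℝ f p v = l * heisenbergForm p v

noncomputable def ellipsoidFun (a b c : ℝ) (p : ℝ × ℝ × ℝ) : ℝ :=
  p.1 ^ 2 / a ^ 2 + p.2.1 ^ 2 / b ^ 2 + p.2.2 ^ 2 / c ^ 2 - 1

lemma heisenbergForm_self (p : ℝ × ℝ × ℝ) : heisenbergForm p p = p.2.2 := by
  simp only [heisenbergForm]
  ring

lemma fderiv_ellipsoidFun_apply (a b c : ℝ) (p v : ℝ × ℝ × ℝ) :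
    fderiv ℝ (ellipsoidFun a b c) p v =
      2 * p.1 * v.1 / a ^ 2 + 2 * p.2.1 * v.2.1 / b ^ 2 + 2 * p.2.2 * v.2.2 / c ^ 2 := by
  have hx : HasFDerivAt (fun q : ℝ × ℝ × ℝ => q.1) _ p := hasFDerivAt_fst (𝕜 := ℝ)
  have hy : HasFDerivAt (fun q : ℝ × ℝ × ℝ => q.2.1) _ p := (hasFDerivAt_snd (𝕜 := ℝ)).fst
  have hz : HasFDerivAt (fun q : ℝ × ℝ × ℝ => q.2.2) _ p := (hasFDerivAt_snd (𝕜 := ℝ)).snd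
  have h : HasFDerivAt (ellipsoidFun a b c) _ p :=
    ((((hx.pow 2).mul_const (a ^ 2)⁻¹).add ((hy.pow 2).mul_const (b ^ 2)⁻¹)).add
      ((hz.pow 2).mul_const (c ^ 2)⁻¹)).sub_const 1
  rw [h.fderiv]
  simp only [Nat.add_one_sub_one, pow_one, nsmul_eq_mul, Nat.cast_ofNat, add_apply,
    smul_apply, ContinuousLinearMap.coe_fst', smul_eq_mul,
    ContinuousLinearMap.comp_apply, ContinuousLinearMap.coe_snd']
  ring

lemma fderiv_ellipsoidFun_apply_self (a b c : ℝ) (p : ℝ × ℝ × ℝ) :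
    fderiv ℝ (ellipsoidFun a b c) p p = 2 * (ellipsoidFun a b c p + 1) := by
  rw [fderiv_ellipsoidFun_apply, ellipsoidFun]
  ring

lemma eq_zero_and_eq_zero_of_nonneg_diag_add_skew {α β l x y : ℝ} (hα : 0 ≤ α) (hβ : 0 ≤ β)
    (hl : l ≠ 0) (h₁ : 2 * α * x = l * y / 2) (h₂ : 2 * β * y = -(l * x / 2)) :
    x = 0 ∧ y = 0 := by
  have hdet : 4 * α * β + l ^ 2 / 4 ≠ 0 := by positivity
  constructor
  · have : x * (4 * α * β + l ^ 2 / 4) = 0 := by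
      linear_combination (2 * β) * h₁ + (l / 2) * h₂
    simpa [hdet] using this
  · have : y * (4 * α * β + l ^ 2 / 4) = 0 := by
      linear_combination (2 * α) * h₂ - (l / 2) * h₁
    simpa [hdet] using this

lemma eq_pole_of_isCharacteristicPoint_ellipsoidFun {a b c : ℝ} {p : ℝ × ℝ × ℝ}
    (h : IsCharacteristicPoint (ellipsoidFun a b c) p) : p = (0, 0, c) ∨ p = (0, 0, -c) := by
  obtain ⟨hp, l, hl⟩ := h
  have hlz : l * p.2.2 = 2 := by
    simpa [fderiv_ellipsoidFun_apply_self, heisenbergForm_self, hp] using (hl p).symm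
  obtain ⟨x, y, z⟩ := p
  have h₁ := hl (1, 0, 0)
  have h₂ := hl (0, 1, 0)
  simp only [fderiv_ellipsoidFun_apply, heisenbergForm] at h₁ h₂
  obtain ⟨rfl, rfl⟩ : x = 0 ∧ y = 0 :=
    eq_zero_and_eq_zero_of_nonneg_diag_add_skew (α := (a ^ 2)⁻¹) (β := (b ^ 2)⁻¹)
      (by positivity) (by positivity) (left_ne_zero_of_mul (hlz ▸ two_ne_zero))
      (by linear_combination h₁) (by linear_combination h₂)
  have hz : z ^ 2 / c ^ 2 = 1 := by
    rw [ellipsoidFun] at hp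
    linear_combination hp
  have hc : c ^ 2 ≠ 0 := by
    rintro h
    simp [h] at hz
  rcases sq_eq_sq_iff_eq_or_eq_neg.mp ((div_eq_one_iff_eq hc).mp hz) with rfl | rfl
  · exact Or.inl rfl
  · exact Or.inr rfl

lemma isCharacteristicPoint_ellipsoidFun_pole {a b c z : ℝ} (hc : c ≠ 0) (hz : z ^ 2 = c ^ 2) :
    IsCharacteristicPoint (ellipsoidFun a b c) (0, 0, z) := by
  refine ⟨?_, 2 * z / c ^ 2, fun v => ?_⟩
  · simp [ellipsoidFun, hz, hc]
  · simp only [fderiv_ellipsoidFun_apply, heisenbergForm]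
    ring

lemma isCharacteristicPoint_ellipsoidFun_iff {a b c : ℝ} {p : ℝ × ℝ × ℝ} (hc : c ≠ 0) :
    IsCharacteristicPoint (ellipsoidFun a b c) p ↔ p = (0, 0, c) ∨ p = (0, 0, -c) := by
  refine ⟨eq_pole_of_isCharacteristicPoint_ellipsoidFun, ?_⟩
  rintro (rfl | rfl)
  · exact isCharacteristicPoint_ellipsoidFun_pole hc rfl
  · exact isCharacteristicPoint_ellipsoidFun_pole hc (neg_sq c)

theorem ellipsoid_two_characteristic_points_general
    (a b c : ℝ) (hc : 0 < c)
    (f : ℝ × ℝ × ℝ → ℝ)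
    (hf : f = fun p => p.1 ^ 2 / a ^ 2 + p.2.1 ^ 2 / b ^ 2 + p.2.2 ^ 2 / c ^ 2 - 1) :
    {p : ℝ × ℝ × ℝ | f p = 0 ∧
        ∃ l : ℝ, ∀ v : ℝ × ℝ × ℝ, fderiv ℝ f p v = l * heisenbergForm p v} =
      {((0 : ℝ), (0 : ℝ), c), ((0 : ℝ), (0 : ℝ), -c)} := by
  obtain rfl : f = ellipsoidFun a b c := hf
  ext p
  exact isCharacteristicPoint_ellipsoidFun_iff hc.ne'

/-- The ellipsoid `{x²/a² + y²/b² + z²/c² = 1}` has exactly two characteristic points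
for the Heisenberg contact structure, namely the poles `(0, 0, ±c)`. -/
theorem ellipsoid_two_characteristic_points
    (a b c : ℝ) (ha : 0 < a) (hb : 0 < b) (hc : 0 < c)
    (f : ℝ × ℝ × ℝ → ℝ)
    (hf : f = fun p => p.1 ^ 2 / a ^ 2 + p.2.1 ^ 2 / b ^ 2 + p.2.2 ^ 2 / c ^ 2 - 1) :
    {p : ℝ × ℝ × ℝ | f p = 0 ∧
        ∃ l : ℝ, ∀ v : ℝ × ℝ × ℝ, fderiv ℝ f p v = l * heisenbergForm p v} =
      {((0 : ℝ), (0 : ℝ), c), ((0 : ℝ), (0 : ℝ), -c)} :=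
  ellipsoid_two_characteristic_points_general a b c hc f hf
end

section
/- Let R > r > 0 with r·R < 4 + r², and let Φ : ℝ² → ℝ³, Φ(u, v) = (r·sin u, (R + r·cos u)·cos v, (R + r·cos u)·sin v) (the vertical torus). Then ω_{Φ(u,v)}(∂Φ/∂u (u,v)) = 0 and ω_{Φ(u,v)}(∂Φ/∂v (u,v)) = 0 hold simultaneously if and only if sin u = 0 and cos v = 0. Consequently the characteristic points of the vertical torus are exactly the four points (0, 0, R + r), (0, 0, −(R + r)), (0, 0, R − r), (0, 0, −(R − r)). -/
/-!
Writing `ρ = R + r cos u` for the distance to the axis, a direct computation gives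
`ω(∂Φ/∂v) = ρ (cos v + r sin u sin v / 2)` and
`ω(∂Φ/∂u) = r ((r + R cos u) cos v / 2 − sin u sin v)`.
Since `ρ > 0`, the first vanishes iff `cos v = −r sin u sin v / 2`; substituting into the second
leaves `sin u sin v (4 + r² + rR cos u) = 0`, and `4 + r² + rR cos u ≥ 4 + r² − rR > 0`.
So `sin u sin v = 0`, and `sin v = 0` would force `cos v = 0` as well, which is impossible.
-/

open Real Set

def IsCharacteristicAt (Φ : ℝ → ℝ → ℝ × ℝ × ℝ) (u v : ℝ) : Prop :=
  heisenbergForm (Φ u v) (deriv (fun s => Φ s v) u) = 0 ∧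
    heisenbergForm (Φ u v) (deriv (fun t => Φ u t) v) = 0

noncomputable def verticalTorus (r R u v : ℝ) : ℝ × ℝ × ℝ :=
  (r * sin u, (R + r * cos u) * cos v, (R + r * cos u) * sin v)

namespace verticalTorus

variable (r R : ℝ)

theorem deriv_left (u v : ℝ) :
    deriv (fun s => verticalTorus r R s v) u =
      (r * cos u, r * -sin u * cos v, r * -sin u * sin v) := by
  have hρ := ((hasDerivAt_cos u).const_mul r).const_add R
  exact (((hasDerivAt_sin u).const_mul r).prodMk
    ((hρ.mul_const (cos v)).prodMk (hρ.mul_const (sin v)))).deriv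

theorem deriv_right (u v : ℝ) :
    deriv (fun t => verticalTorus r R u t) v =
      (0, (R + r * cos u) * -sin v, (R + r * cos u) * cos v) :=
  ((hasDerivAt_const v (r * sin u)).prodMk
    (((hasDerivAt_cos v).const_mul _).prodMk ((hasDerivAt_sin v).const_mul _))).deriv

theorem heisenbergForm_deriv_left (u v : ℝ) :
    heisenbergForm (verticalTorus r R u v) (deriv (fun s => verticalTorus r R s v) u) =
      r * ((r + R * cos u) * cos v / 2 - sin u * sin v) := by
  rw [deriv_left, heisenbergForm, verticalTorus]
  linear_combination r ^ 2 * cos v / 2 * sin_sq_add_cos_sq u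

theorem heisenbergForm_deriv_right (u v : ℝ) :
    heisenbergForm (verticalTorus r R u v) (deriv (fun t => verticalTorus r R u t) v) =
      (R + r * cos u) * (cos v + r * sin u * sin v / 2) := by
  rw [deriv_right, heisenbergForm, verticalTorus]
  ring

theorem isCharacteristicAt_iff {u v : ℝ} (hr : r ≠ 0) (hρ : R + r * cos u ≠ 0)
    (hq : 4 + r ^ 2 + r * R * cos u ≠ 0) :
    IsCharacteristicAt (verticalTorus r R) u v ↔ sin u = 0 ∧ cos v = 0 := by
  rw [IsCharacteristicAt, heisenbergForm_deriv_left, heisenbergForm_deriv_right]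
  simp only [mul_eq_zero, hr, hρ, false_or]
  constructor
  · rintro ⟨hu, hv⟩
    have hcos : cos v = -(r * sin u * sin v / 2) := by linear_combination hv
    have hsin : sin u * sin v = 0 := by
      have : sin u * sin v * (4 + r ^ 2 + r * R * cos u) = 0 := by
        linear_combination -4 * hu + 2 * (r + R * cos u) * hv
      simpa [hq] using this
    rcases mul_eq_zero.1 hsin with hsu | hsv
    · exact ⟨hsu, by simpa [hsu] using hcos⟩
    · have := sin_sq_add_cos_sq v
      simp [hsv, hcos] at this
  · rintro ⟨hsu, hcv⟩
    simp [hsu, hcv]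

theorem radius_pos (hr : 0 < r) (hrR : r < R) (u : ℝ) : 0 < R + r * cos u := by
  nlinarith [neg_one_le_cos u]

theorem four_add_sq_add_mul_cos_pos (hr : 0 < r) (hrR : r < R) (hsmall : r * R < 4 + r ^ 2)
    (u : ℝ) : 0 < 4 + r ^ 2 + r * R * cos u := by
  nlinarith [neg_one_le_cos u, mul_pos hr (hr.trans hrR)]

theorem image_sin_eq_zero_cos_eq_zero :
    {p : ℝ × ℝ × ℝ | ∃ u v : ℝ, p = verticalTorus r R u v ∧ sin u = 0 ∧ cos v = 0} =
      {((0 : ℝ), (0 : ℝ), R + r), ((0 : ℝ), (0 : ℝ), -(R + r)),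
       ((0 : ℝ), (0 : ℝ), R - r), ((0 : ℝ), (0 : ℝ), -(R - r))} := by
  ext p
  simp only [mem_ofPred_eq, mem_insert_iff, mem_singleton_iff]
  constructor
  · rintro ⟨u, v, rfl, hsu, hcv⟩
    rcases sin_eq_zero_iff_cos_eq.1 hsu with hcu | hcu <;>
      rcases cos_eq_zero_iff_sin_eq.1 hcv with hsv | hsv <;>
      simp [verticalTorus, hsu, hcv, hcu, hsv, ← sub_eq_add_neg]
  · rintro (rfl | rfl | rfl | rfl)
    exacts [⟨0, π / 2, by simp [verticalTorus], by simp⟩,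
      ⟨0, -(π / 2), by simp [verticalTorus], by simp⟩,
      ⟨π, π / 2, by simp [verticalTorus, ← sub_eq_add_neg], by simp⟩,
      ⟨π, -(π / 2), by simp [verticalTorus, ← sub_eq_add_neg], by simp⟩]

end verticalTorus

/-- For the vertical torus `Φ(u,v) = (r sin u, (R + r cos u) cos v, (R + r cos u) sin v)`
with `R > r > 0` and `rR < 4 + r²`, the characteristic condition
`ω(∂Φ/∂u) = ω(∂Φ/∂v) = 0` holds exactly when `sin u = 0` and `cos v = 0`; consequently
the characteristic points are exactly `(0, 0, ±(R + r))` and `(0, 0, ±(R − r))`. -/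
theorem vertical_torus_four_characteristic_points
    (r R : ℝ) (hr : 0 < r) (hrR : r < R) (hsmall : r * R < 4 + r ^ 2)
    (Φ : ℝ → ℝ → ℝ × ℝ × ℝ)
    (hΦ : Φ = fun u v =>
      (r * Real.sin u,
       (R + r * Real.cos u) * Real.cos v,
       (R + r * Real.cos u) * Real.sin v)) :
    (∀ u v : ℝ,
      (heisenbergForm (Φ u v) (deriv (fun s => Φ s v) u) = 0 ∧
       heisenbergForm (Φ u v) (deriv (fun t => Φ u t) v) = 0) ↔
      (Real.sin u = 0 ∧ Real.cos v = 0)) ∧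
    {p : ℝ × ℝ × ℝ | ∃ u v : ℝ, p = Φ u v ∧
        heisenbergForm (Φ u v) (deriv (fun s => Φ s v) u) = 0 ∧
        heisenbergForm (Φ u v) (deriv (fun t => Φ u t) v) = 0} =
      {((0 : ℝ), (0 : ℝ), R + r), ((0 : ℝ), (0 : ℝ), -(R + r)),
       ((0 : ℝ), (0 : ℝ), R - r), ((0 : ℝ), (0 : ℝ), -(R - r))} := by
  obtain rfl : Φ = verticalTorus r R := hΦ
  have hchar (u v : ℝ) : IsCharacteristicAt (verticalTorus r R) u v ↔ sin u = 0 ∧ cos v = 0 :=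
    verticalTorus.isCharacteristicAt_iff r R hr.ne' (verticalTorus.radius_pos r R hr hrR u).ne'
      (verticalTorus.four_add_sq_add_mul_cos_pos r R hr hrR hsmall u).ne'
  refine ⟨hchar, ?_⟩
  show {p | ∃ u v, p = _ ∧ IsCharacteristicAt (verticalTorus r R) u v} = _
  simp only [hchar]
  exact verticalTorus.image_sin_eq_zero_cos_eq_zero r R
end

section
/- Fix R > r > 0 and consider the vector field F : ℝ² → ℝ², F(u, v) = ((R + r·cos u)²/2, −(r·cos u)/2), together with the canonical projection π : ℝ² → (ℝ/2πℤ) × (ℝ/2πℤ). Then at least one of the following holds: either for every curve γ : ℝ → ℝ² satisfying γ'(t) = F(γ(t)) for all t ∈ ℝ there exists T > 0 such that π(γ(t + T)) = π(γ(t)) for all t ∈ ℝ (every trajectory on the torus is periodic), or for every such curve γ the image of π ∘ γ is dense in (ℝ/2πℤ) × (ℝ/2πℤ) (every trajectory on the torus is everywhere dense). -/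
/-!
For the flow `u' = g u`, `v' = h u` with `g > 0` and `g`, `h` both `p`-periodic, separating
variables shows that every trajectory needs the same time `T = ∫₀ᵖ du / g` to increase `u` by
`p`, during which `v` increases by the same amount `Δ = ∫₀ᵖ h / g du`. So on the torus the
time-`T` map along every trajectory is the translation by `(0, Δ)`, where `Δ` does not depend on
the trajectory. If `Δ` has finite order `n` in `ℝ/pℤ`, every trajectory is `nT`-periodic.
Otherwise the multiples of `Δ` are dense in the circle, and since `u` sweeps out the whole
circle within time `T`, every trajectory is dense.
-/

open Set Function

theorem apply_add_zsmul_of_apply_add {M G : Type*} [AddGroup M] [AddGroup G] {f : M → G} {T : M}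
    {c : G} (hf : ∀ t, f (t + T) = f t + c) (t : M) (n : ℤ) : f (t + n • T) = f t + n • c :=
  AddConstMapClass.map_add_zsmul (⟨f, hf⟩ : AddConstMap M G T c) t n

theorem denseRange_of_apply_add_eq_add_mk_zero {M A B : Type*} [AddGroup M] [AddGroup A]
    [AddGroup B] [TopologicalSpace A] [TopologicalSpace B] [ContinuousAdd B] {Γ : M → A × B}
    {T : M} {δ : B} (hΓ : ∀ t, Γ (t + T) = Γ t + (0, δ)) (hfst : Surjective fun t => (Γ t).1)
    (hδ : DenseRange fun n : ℤ => n • δ) : DenseRange Γ := by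
  rintro ⟨a, b⟩
  obtain ⟨s, rfl⟩ := hfst a
  have hmaps : MapsTo (fun z => ((Γ s).1, (Γ s).2 + z)) (range fun n : ℤ => n • δ) (range Γ) := by
    rintro _ ⟨n, rfl⟩
    refine ⟨s + n • T, ?_⟩
    simp [apply_add_zsmul_of_apply_add hΓ, Prod.ext_iff]
  have hcont : Continuous fun z => ((Γ s).1, (Γ s).2 + z) := by fun_prop
  simpa using map_mem_closure hcont (hδ (-(Γ s).2 + b)) hmaps

theorem surjective_coe_comp_of_apply_eq_add_period {p : ℝ} [Fact (0 < p)] {u : ℝ → ℝ}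
    (hu : Continuous u) {T : ℝ} (hT : 0 ≤ T) (huT : u T = u 0 + p) :
    Surjective fun t => (u t : AddCircle p) := by
  intro y
  have hy : (AddCircle.equivIco p (u 0) y : ℝ) ∈ Icc (u 0) (u T) := by
    rw [huT]
    exact Ico_subset_Icc_self (AddCircle.equivIco p (u 0) y).2
  obtain ⟨s, -, hs⟩ := intermediate_value_Icc hT hu.continuousOn hy
  exact ⟨s, by simp only [hs, AddCircle.coe_equivIco]⟩

section Flow

variable {g h : ℝ → ℝ} {p : ℝ}

noncomputable def returnTime (g : ℝ → ℝ) (p : ℝ) : ℝ := ∫ x in 0..p, (g x)⁻¹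

noncomputable def returnShift (g h : ℝ → ℝ) (p : ℝ) : ℝ := ∫ x in 0..p, h x / g x

theorem returnTime_pos (hg : Continuous g) (hg_pos : ∀ x, 0 < g x) (hp : 0 < p) :
    0 < returnTime g p :=
  intervalIntegral.intervalIntegral_pos_of_pos
    ((hg.inv₀ fun x => (hg_pos x).ne').intervalIntegrable _ _) (fun x => inv_pos.2 (hg_pos x)) hp

theorem strictMono_integral_inv (hg : Continuous g) (hg_pos : ∀ x, 0 < g x) (a : ℝ) :
    StrictMono fun x => ∫ y in a..x, (g y)⁻¹ := by
  have hcont : Continuous fun y => (g y)⁻¹ := hg.inv₀ fun x => (hg_pos x).ne'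
  refine strictMono_of_deriv_pos fun x => ?_
  rw [hcont.deriv_integral]
  exact inv_pos.2 (hg_pos x)

theorem integral_div_eq_sub_of_hasDerivAt (hg : Continuous g) (hg0 : ∀ x, g x ≠ 0)
    (hh : Continuous h) {u v : ℝ → ℝ} (hu : ∀ t, HasDerivAt u (g (u t)) t)
    (hv : ∀ t, HasDerivAt v (h (u t)) t) (a b : ℝ) :
    ∫ x in u a..u b, h x / g x = v b - v a := by
  have hhg : Continuous fun x => h x / g x := hh.div hg hg0
  have hF : ∀ t, HasDerivAt (fun t => (∫ x in u a..u t, h x / g x) - v t) 0 t := fun t => by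
    have := ((hhg.integral_hasStrictDerivAt (u a) (u t)).hasDerivAt.comp t (hu t)).sub (hv t)
    rwa [div_mul_cancel₀ _ (hg0 (u t)), sub_self] at this
  have := is_const_of_deriv_eq_zero (fun t => (hF t).differentiableAt) (fun t => (hF t).deriv) b a
  rw [intervalIntegral.integral_same] at this
  linarith

def toTorus (p : ℝ) : ℝ × ℝ →+ AddCircle p × AddCircle p :=
  (QuotientAddGroup.mk' _).prodMap (QuotientAddGroup.mk' _)

theorem apply_add_returnTime_of_hasDerivAt (hg : Continuous g) (hg_pos : ∀ x, 0 < g x)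
    (hgp : Periodic g p) {u : ℝ → ℝ} (hu : ∀ t, HasDerivAt u (g (u t)) t) (t : ℝ) :
    u (t + returnTime g p) = u t + p := by
  have hg0 : ∀ x, g x ≠ 0 := fun x => (hg_pos x).ne'
  refine (strictMono_integral_inv hg hg_pos (u t)).injective ?_
  have h_time := integral_div_eq_sub_of_hasDerivAt hg hg0 continuous_const hu
    (fun t => hasDerivAt_id t) t (t + returnTime g p)
  simp only [one_div, id] at h_time
  have hgp_inv : Periodic (fun x => (g x)⁻¹) p := hgp.comp _
  rw [h_time, hgp_inv.intervalIntegral_add_eq (u t) 0, zero_add, returnTime]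
  ring

theorem flowLine_add_returnTime (hg : Continuous g) (hg_pos : ∀ x, 0 < g x) (hgp : Periodic g p)
    (hh : Continuous h) (hhp : Periodic h p) {γ : ℝ → ℝ × ℝ}
    (hγ : ∀ t, HasDerivAt γ (g (γ t).1, h (γ t).1) t) (t : ℝ) :
    γ (t + returnTime g p) = γ t + (p, returnShift g h p) := by
  have hu : ∀ t, HasDerivAt (fun s => (γ s).1) (g (γ t).1) t := fun t =>
    (ContinuousLinearMap.fst ℝ ℝ ℝ).hasFDerivAt.comp_hasDerivAt t (hγ t)
  have hv : ∀ t, HasDerivAt (fun s => (γ s).2) (h (γ t).1) t := fun t =>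
    (ContinuousLinearMap.snd ℝ ℝ ℝ).hasFDerivAt.comp_hasDerivAt t (hγ t)
  have h_fst := apply_add_returnTime_of_hasDerivAt hg hg_pos hgp hu t
  refine Prod.ext h_fst ?_
  have h_shift := integral_div_eq_sub_of_hasDerivAt hg (fun x => (hg_pos x).ne') hh hu hv t
    (t + returnTime g p)
  have hhgp : Periodic (fun x => h x / g x) p := hhp.div hgp
  rw [h_fst, hhgp.intervalIntegral_add_eq (γ t).1 0, zero_add] at h_shift
  rw [Prod.snd_add, returnShift]
  linarith

theorem toTorus_flowLine_add_returnTime (hg : Continuous g) (hg_pos : ∀ x, 0 < g x)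
    (hgp : Periodic g p) (hh : Continuous h) (hhp : Periodic h p) {γ : ℝ → ℝ × ℝ}
    (hγ : ∀ t, HasDerivAt γ (g (γ t).1, h (γ t).1) t) (t : ℝ) :
    toTorus p (γ (t + returnTime g p)) =
      toTorus p (γ t) + (0, (returnShift g h p : AddCircle p)) := by
  rw [flowLine_add_returnTime hg hg_pos hgp hh hhp hγ t, map_add]
  simp [toTorus, AddCircle.coe_period]

theorem toTorus_flowLine_periodic (hg : Continuous g) (hg_pos : ∀ x, 0 < g x)
    (hgp : Periodic g p) (hh : Continuous h) (hhp : Periodic h p) {γ : ℝ → ℝ × ℝ}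
    (hγ : ∀ t, HasDerivAt γ (g (γ t).1, h (γ t).1) t) (t : ℝ) :
    toTorus p (γ (t + addOrderOf (returnShift g h p : AddCircle p) • returnTime g p)) =
      toTorus p (γ t) := by
  have := apply_add_zsmul_of_apply_add (f := toTorus p ∘ γ)
    (toTorus_flowLine_add_returnTime hg hg_pos hgp hh hhp hγ) t
    (addOrderOf (returnShift g h p : AddCircle p))
  simpa [addOrderOf_nsmul_eq_zero, Prod.mk_zero_zero] using this

theorem denseRange_toTorus_comp_flowLine [Fact (0 < p)] (hg : Continuous g) (hg_pos : ∀ x, 0 < g x)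
    (hgp : Periodic g p) (hh : Continuous h) (hhp : Periodic h p) {γ : ℝ → ℝ × ℝ}
    (hγ : ∀ t, HasDerivAt γ (g (γ t).1, h (γ t).1) t)
    (hδ : addOrderOf (returnShift g h p : AddCircle p) = 0) :
    DenseRange (toTorus p ∘ γ) := by
  have hγ_cont : Continuous γ := continuous_iff_continuousAt.2 fun t => (hγ t).continuousAt
  have h_turn : (γ (returnTime g p)).1 = (γ 0).1 + p := by
    simpa using congrArg Prod.fst (flowLine_add_returnTime hg hg_pos hgp hh hhp hγ 0)
  refine denseRange_of_apply_add_eq_add_mk_zero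
    (toTorus_flowLine_add_returnTime hg hg_pos hgp hh hhp hγ) ?_
    (AddCircle.denseRange_zsmul_iff.2 hδ)
  exact surjective_coe_comp_of_apply_eq_add_period (continuous_fst.comp hγ_cont)
    (returnTime_pos hg hg_pos Fact.out).le h_turn

end Flow

/-- The characteristic foliation of the horizontal torus in the Heisenberg group,
written in angular coordinates as the flow of
`F(u,v) = ((R + r cos u)²/2, −(r cos u)/2)` on the torus `(ℝ/2πℤ)²`, is filled either
with periodic trajectories or with everywhere dense trajectories. -/
theorem horizontal_torus_periodic_or_dense
    (r R : ℝ) (hr : 0 < r) (hrR : r < R)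
    (F : ℝ × ℝ → ℝ × ℝ)
    (hF : F = fun p => ((R + r * Real.cos p.1) ^ 2 / 2, -(r * Real.cos p.1) / 2))
    (π : ℝ × ℝ → AddCircle (2 * Real.pi) × AddCircle (2 * Real.pi))
    (hπ : π = fun p => ((p.1 : AddCircle (2 * Real.pi)), (p.2 : AddCircle (2 * Real.pi)))) :
    (∀ γ : ℝ → ℝ × ℝ, (∀ t : ℝ, HasDerivAt γ (F (γ t)) t) →
      ∃ T : ℝ, 0 < T ∧ ∀ t : ℝ, π (γ (t + T)) = π (γ t)) ∨
    (∀ γ : ℝ → ℝ × ℝ, (∀ t : ℝ, HasDerivAt γ (F (γ t)) t) →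
      Dense (Set.range (π ∘ γ))) := by
  subst hF hπ
  have : Fact (0 < 2 * Real.pi) := ⟨Real.two_pi_pos⟩
  set g : ℝ → ℝ := fun x => (R + r * Real.cos x) ^ 2 / 2
  set h : ℝ → ℝ := fun x => -(r * Real.cos x) / 2
  have hg : Continuous g := by fun_prop
  have hh : Continuous h := by fun_prop
  have hg_pos : ∀ x, 0 < g x := fun x => by
    have : -r ≤ r * Real.cos x := by nlinarith [Real.neg_one_le_cos x]
    have : 0 < R + r * Real.cos x := by linarith
    positivity
  have hgp : Periodic g (2 * Real.pi) := Real.cos_periodic.comp fun c => (R + r * c) ^ 2 / 2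
  have hhp : Periodic h (2 * Real.pi) := Real.cos_periodic.comp fun c => -(r * c) / 2
  rcases eq_or_ne (addOrderOf (returnShift g h (2 * Real.pi) : AddCircle (2 * Real.pi))) 0
    with hδ | hδ
  · exact Or.inr fun γ hγ => denseRange_toTorus_comp_flowLine hg hg_pos hgp hh hhp hγ hδ
  · exact Or.inl fun γ hγ => ⟨_, nsmul_pos (returnTime_pos hg hg_pos Real.two_pi_pos) hδ,
      toTorus_flowLine_periodic hg hg_pos hgp hh hhp hγ⟩
end
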